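/- Let nabla R: Z x R^{2N} -> R^{2N} be continuous in z with the linear growth bound |nabla R(n,z)| <= C|z| for all n, z. If x_k converges weakly to x in l^2(Z, R^{2N}), then for every y in l^2(Z, R^{2N}), sum_n nabla R(n, x_k(n))·y(n) -> sum_n nabla R(n, x(n))·y(n); i.e., the derivative Psi' is weakly sequentially continuous. -/

import Mathlib

open Filter
open scoped RealInnerProductSpace ENNReal

/-- Auxiliary: weak convergence in `lp G 2` from a uniform norm bound and pointwise
convergence. -/
lemma weak_aux {ι : Type*} [DecidableEq ι] {G : ι → Type*}
    [∀ i, NormedAddCommGroup (G i)] [∀ i, InnerProductSpace ℝ (G i)]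
    (u : ℕ → lp G 2) (v : lp G 2) (M : ℝ)
    (hM : ∀ k, ‖u k‖ ≤ M)
    (hpt : ∀ i, Tendsto (fun k => u k i) atTop (nhds (v i)))
    (Y : lp G 2) :
    Tendsto (fun k => (⟪u k, Y⟫ : ℝ)) atTop (nhds ⟪v, Y⟫) := by
  have hM0 : 0 ≤ M := (norm_nonneg (u 0)).trans (hM 0)
  rw [Metric.tendsto_atTop]
  intro ε hε
  set D : ℝ := M + ‖v‖ + 1 with hD
  have hD0 : 0 < D := by positivity
  have hε' : 0 < ε / (2 * D) := by positivity
  -- choose a finite truncation of Y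
  have hsum : HasSum (fun i : ι => lp.single 2 i (Y i)) Y :=
    lp.hasSum_single ENNReal.ofNat_ne_top Y
  have hball := hsum.eventually (Metric.ball_mem_nhds Y hε')
  obtain ⟨S, hS⟩ := hball.exists
  set Ys : lp G 2 := ∑ i ∈ S, lp.single 2 i (Y i) with hYs
  have hYdist : ‖Y - Ys‖ < ε / (2 * D) := by
    have : dist Ys Y < ε / (2 * D) := hS
    rwa [dist_eq_norm, ← norm_neg, neg_sub] at this
  -- the truncated inner products converge
  have hinner : ∀ w : lp G 2, (⟪w, Ys⟫ : ℝ) = ∑ i ∈ S, ⟪w i, Y i⟫ := by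
    intro w
    rw [hYs, inner_sum]
    exact Finset.sum_congr rfl fun i _ => lp.inner_single_right i (Y i) w
  have htrunc : Tendsto (fun k => (⟪u k, Ys⟫ : ℝ)) atTop (nhds ⟪v, Ys⟫) := by
    simp only [hinner]
    exact tendsto_finset_sum S fun i _ =>
      Filter.Tendsto.inner (hpt i) tendsto_const_nhds
  rw [Metric.tendsto_atTop] at htrunc
  obtain ⟨K, hK⟩ := htrunc (ε / 2) (by positivity)
  refine ⟨K, fun k hk => ?_⟩
  have h1 : |(⟪u k, Ys⟫ : ℝ) - ⟪v, Ys⟫| < ε / 2 := by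
    have := hK k hk
    rwa [Real.dist_eq] at this
  have hsplit : (⟪u k, Y⟫ : ℝ) - ⟪v, Y⟫ =
      ((⟪u k, Ys⟫ : ℝ) - ⟪v, Ys⟫) + (⟪u k - v, Y - Ys⟫ : ℝ) := by
    simp only [inner_sub_left, inner_sub_right]
    ring
  have h2 : |(⟪u k - v, Y - Ys⟫ : ℝ)| ≤ (M + ‖v‖) * (ε / (2 * D)) := by
    refine (abs_real_inner_le_norm _ _).trans ?_
    have hn1 : ‖u k - v‖ ≤ M + ‖v‖ :=
      (norm_sub_le _ _).trans (add_le_add (hM k) le_rfl)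
    exact mul_le_mul hn1 hYdist.le (norm_nonneg _) (by positivity)
  have h3 : (M + ‖v‖) * (ε / (2 * D)) < ε / 2 := by
    have hlt : M + ‖v‖ < D := by rw [hD]; linarith
    rw [div_mul_eq_div_div]
    calc (M + ‖v‖) * (ε / 2 / D) < D * (ε / 2 / D) := by
          apply mul_lt_mul_of_pos_right hlt; positivity
      _ = ε / 2 := by field_simp
  rw [Real.dist_eq, hsplit]
  calc |((⟪u k, Ys⟫ : ℝ) - ⟪v, Ys⟫) + (⟪u k - v, Y - Ys⟫ : ℝ)|
      ≤ |(⟪u k, Ys⟫ : ℝ) - ⟪v, Ys⟫| + |(⟪u k - v, Y - Ys⟫ : ℝ)| := abs_add_le _ _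
    _ < ε / 2 + ε / 2 := by
        have := h2.trans_lt h3
        linarith
    _ = ε := by ring

/-- If `∇R(n,·)` is continuous with linear growth `|∇R(n,z)| ≤ C|z|`, and `x_k ⇀ x`
weakly in `ℓ²(ℤ, ℝ^{2N})`, then `Ψ'(x_k)y = ∑_n ∇R(n,x_k(n))·y(n)` converges to
`Ψ'(x)y` for every `y ∈ ℓ²`; i.e. `Ψ'` is weakly sequentially continuous. -/
theorem stmt_10 {N : ℕ}
    (gradR : ℤ → EuclideanSpace ℝ (Fin (2 * N)) → EuclideanSpace ℝ (Fin (2 * N)))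
    (hcont : ∀ n, Continuous (gradR n))
    (C : ℝ) (hC : 0 < C)
    (hgrowth : ∀ n z, ‖gradR n z‖ ≤ C * ‖z‖)
    (x : ℕ → ℤ → EuclideanSpace ℝ (Fin (2 * N)))
    (x₀ : ℤ → EuclideanSpace ℝ (Fin (2 * N)))
    (hx : ∀ k, Summable fun n => ‖x k n‖ ^ 2)
    (hx₀ : Summable fun n => ‖x₀ n‖ ^ 2)
    (hweak : ∀ y : ℤ → EuclideanSpace ℝ (Fin (2 * N)),
      (Summable fun n => ‖y n‖ ^ 2) →
      Tendsto (fun k => ∑' n : ℤ, ⟪x k n, y n⟫) atTop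
        (nhds (∑' n : ℤ, ⟪x₀ n, y n⟫))) :
    ∀ y : ℤ → EuclideanSpace ℝ (Fin (2 * N)), (Summable fun n => ‖y n‖ ^ 2) →
      Tendsto (fun k => ∑' n : ℤ, ⟪gradR n (x k n), y n⟫) atTop
        (nhds (∑' n : ℤ, ⟪gradR n (x₀ n), y n⟫)) := by
  classical
  intro y hy
  -- membership criterion for lp 2
  have mem2 : ∀ f : ℤ → EuclideanSpace ℝ (Fin (2 * N)), (Summable fun n => ‖f n‖ ^ 2) → Memℓp f 2 := by
    intro f hf
    apply memℓp_gen
    have h2 : (2 : ℝ≥0∞).toReal = (2 : ℝ) := by norm_num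
    rw [h2]
    have : (fun n : ℤ => ‖f n‖ ^ (2 : ℝ)) = fun n : ℤ => ‖f n‖ ^ (2 : ℕ) := by
      funext n
      rw [← Real.rpow_natCast]; norm_num
    rw [this]
    exact hf
  -- reverse direction
  have mem2' : ∀ f : lp (fun _ : ℤ => EuclideanSpace ℝ (Fin (2 * N))) 2, Summable fun n => ‖f n‖ ^ 2 := by
    intro f
    have := (lp.memℓp f).summable (p := 2) (by norm_num)
    have h : (fun n : ℤ => ‖f n‖ ^ (2 : ℝ≥0∞).toReal) =
        fun n : ℤ => ‖f n‖ ^ (2 : ℕ) := by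
      funext n
      rw [show (2 : ℝ≥0∞).toReal = (2 : ℝ) by norm_num, ← Real.rpow_natCast]
      norm_num
    rwa [h] at this
  set X : ℕ → lp (fun _ : ℤ => EuclideanSpace ℝ (Fin (2 * N))) 2 := fun k => ⟨x k, mem2 _ (hx k)⟩ with hX
  set X₀ : lp (fun _ : ℤ => EuclideanSpace ℝ (Fin (2 * N))) 2 := ⟨x₀, mem2 _ hx₀⟩ with hX₀
  -- uniform bound via Banach–Steinhaus
  obtain ⟨M, hM⟩ : ∃ M : ℝ, ∀ k, ‖X k‖ ≤ M := by
    have hptbd : ∀ Y : lp (fun _ : ℤ => EuclideanSpace ℝ (Fin (2 * N))) 2,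
        ∃ b : ℝ, ∀ k, ‖(innerSL ℝ (X k)) Y‖ ≤ b := by
      intro Y
      have hYsum := mem2' Y
      have htd := hweak (fun n => Y n) hYsum
      have heq : ∀ k, (innerSL ℝ (X k)) Y = ∑' n : ℤ, ⟪x k n, Y n⟫ := by
        intro k
        simpa [innerSL_apply_apply] using (lp.inner_eq_tsum (X k) Y)
      have htd' : Tendsto (fun k => ‖(innerSL ℝ (X k)) Y‖) atTop
          (nhds ‖∑' n : ℤ, ⟪x₀ n, Y n⟫‖) := by
        simp only [heq]
        exact htd.norm
      obtain ⟨b, hb⟩ := htd'.bddAbove_range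
      exact ⟨b, fun k => hb ⟨k, rfl⟩⟩
    obtain ⟨M, hM⟩ := banach_steinhaus hptbd
    exact ⟨M, fun k => by simpa [innerSL_apply_norm] using hM k⟩
  -- pointwise convergence
  have hpt : ∀ n : ℤ, Tendsto (fun k => x k n) atTop (nhds (x₀ n)) := by
    intro n
    have hcoord : ∀ v : EuclideanSpace ℝ (Fin (2 * N)), Tendsto (fun k => (⟪x k n, v⟫ : ℝ)) atTop
        (nhds ⟪x₀ n, v⟫) := by
      intro v
      set yv : ℤ → EuclideanSpace ℝ (Fin (2 * N)) := fun m => if m = n then v else 0 with hyv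
      have hsum : Summable fun m => ‖yv m‖ ^ 2 := by
        apply summable_of_ne_finset_zero (s := {n})
        intro m hm
        simp only [Finset.mem_singleton] at hm
        simp [hyv, hm]
      have := hweak yv hsum
      have hts : ∀ z : ℤ → EuclideanSpace ℝ (Fin (2 * N)), (∑' m : ℤ, (⟪z m, yv m⟫ : ℝ)) = ⟪z n, v⟫ := by
        intro z
        rw [tsum_eq_single n]
        · simp [hyv]
        · intro m hm
          simp [hyv, hm]
      have e1 : (fun k => ∑' m : ℤ, (⟪x k m, yv m⟫ : ℝ)) = fun k => (⟪x k n, v⟫ : ℝ) :=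
        funext fun k => hts (x k)
      rw [e1, hts x₀] at this
      exact this
    -- coordinatewise convergence in EuclideanSpace
    have hcoords : ∀ i : Fin (2 * N), Tendsto (fun k => x k n i) atTop
        (nhds (x₀ n i)) := by
      intro i
      have := hcoord (EuclideanSpace.single i (1 : ℝ))
      simpa [EuclideanSpace.inner_single_right] using this
    let e := EuclideanSpace.equiv (Fin (2 * N)) ℝ
    have hpi : Tendsto (fun k => e (x k n)) atTop (nhds (e (x₀ n))) :=
      tendsto_pi_nhds.mpr fun i => hcoords i
    have := (e.symm.continuous.tendsto _).comp hpi
    simpa [Function.comp_def] using this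
  -- package the gradient sequences in lp
  have hGsum : ∀ f : ℤ → EuclideanSpace ℝ (Fin (2 * N)), (Summable fun n => ‖f n‖ ^ 2) →
      Summable fun n => ‖gradR n (f n)‖ ^ 2 := by
    intro f hf
    apply Summable.of_nonneg_of_le (fun n => by positivity)
      (fun n => ?_) (hf.mul_left (C ^ 2))
    calc ‖gradR n (f n)‖ ^ 2 ≤ (C * ‖f n‖) ^ 2 := by
          apply pow_le_pow_left₀ (norm_nonneg _) (hgrowth n (f n))
      _ = C ^ 2 * ‖f n‖ ^ 2 := by ring
  set G : ℕ → lp (fun _ : ℤ => EuclideanSpace ℝ (Fin (2 * N))) 2 :=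
    fun k => ⟨fun n => gradR n (x k n), mem2 _ (hGsum _ (hx k))⟩ with hG
  set G₀ : lp (fun _ : ℤ => EuclideanSpace ℝ (Fin (2 * N))) 2 :=
    ⟨fun n => gradR n (x₀ n), mem2 _ (hGsum _ hx₀)⟩ with hG₀
  -- norm bound for G
  have hGnorm : ∀ k, ‖G k‖ ≤ C * M := by
    intro k
    have hp : (0 : ℝ) < (2 : ℝ≥0∞).toReal := by norm_num
    have h1 : ‖G k‖ ^ (2 : ℕ) ≤ (C * ‖X k‖) ^ (2 : ℕ) := by
      have e1 := lp.norm_rpow_eq_tsum hp (G k)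
      have e2 := lp.norm_rpow_eq_tsum hp (X k)
      have hconv : ∀ r : ℝ, 0 ≤ r → r ^ (2 : ℝ≥0∞).toReal = r ^ (2 : ℕ) := by
        intro r hr
        rw [show (2 : ℝ≥0∞).toReal = ((2 : ℕ) : ℝ) by norm_num, Real.rpow_natCast]
      rw [hconv _ (norm_nonneg _)] at e1 e2
      simp only [hconv _ (norm_nonneg _)] at e1 e2
      rw [e1, mul_pow]
      rw [e2]
      rw [← tsum_mul_left]
      apply Summable.tsum_le_tsum _ (mem2' (G k)) ((mem2' (X k)).mul_left (C ^ 2))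
      intro n
      calc ‖(G k) n‖ ^ 2 ≤ (C * ‖(X k) n‖) ^ 2 := by
            apply pow_le_pow_left₀ (norm_nonneg _) (hgrowth n (x k n))
        _ = C ^ 2 * ‖(X k) n‖ ^ 2 := by ring
    have h2 : ‖G k‖ ≤ C * ‖X k‖ := by
      have hc : 0 ≤ C * ‖X k‖ := by positivity
      exact (pow_le_pow_iff_left₀ (norm_nonneg _) hc (by norm_num)).mp h1
    calc ‖G k‖ ≤ C * ‖X k‖ := h2
      _ ≤ C * M := by
          apply mul_le_mul_of_nonneg_left (hM k) hC.le
  -- pointwise convergence of G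
  have hGpt : ∀ n : ℤ, Tendsto (fun k => (G k) n) atTop (nhds (G₀ n)) := by
    intro n
    exact ((hcont n).tendsto _).comp (hpt n)
  -- apply the weak convergence lemma
  set Y : lp (fun _ : ℤ => EuclideanSpace ℝ (Fin (2 * N))) 2 := ⟨y, mem2 _ hy⟩ with hY
  have := weak_aux G G₀ (C * M) hGnorm hGpt Y
  simp only [lp.inner_eq_tsum] at this
  exact this
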